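/- The function u(x,t) = 10 + 4·tanh(6 + 1.6·t − 0.4·x) solves the variable-coefficient forced Burgers equation u_t + (2/5)·u·u_x − 2·u_xx = 0 for all (x,t) ∈ ℝ². (This is the vc-FBE with constant nonlinear coefficient a = 2/5, dispersive coefficient b = −2 and vanishing external-force term, arising from the parameter choice b1 = 0, b2 = −2, m = 0, p = −5, q = 10, L = 4, w = 6.) -/

import Mathlib

/-!
A front `u = q + L tanh θ` with phase `θ = w + ω t - k x` has `u_t = ω L sech² θ`,
`u_x = -k L sech² θ` and `u_xx = -2 k² L tanh θ sech² θ`, so the Burgers residual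
`u_t + a u u_x - ν u_xx` equals `L sech² θ ((ω - a q k) - (a L - 2 ν k) k tanh θ)`.
It vanishes when the wave speed is `ω / k = a q` and the amplitude is `L = 2 ν k / a`;
for `a = 2/5`, `ν = 2`, `q = 10`, `L = 4`, `ω = 1.6`, `k = 0.4` both relations hold.
-/

open Real

theorem Real.hasDerivAt_tanh (x : ℝ) : HasDerivAt tanh (1 - tanh x ^ 2) x := by
  have hcosh : cosh x ≠ 0 := (cosh_pos x).ne'
  have hquot := (hasDerivAt_sinh x).div (hasDerivAt_cosh x) hcosh
  rw [show (sinh / cosh : ℝ → ℝ) = tanh from funext fun y => (tanh_eq_sinh_div_cosh y).symm]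
    at hquot
  refine hquot.congr_deriv ?_
  rw [tanh_eq_sinh_div_cosh]
  field_simp

theorem HasDerivAt.tanh {φ : ℝ → ℝ} {d y : ℝ} (hφ : HasDerivAt φ d y) :
    HasDerivAt (fun z => Real.tanh (φ z)) ((1 - Real.tanh (φ y) ^ 2) * d) y :=
  (hasDerivAt_tanh (φ y)).comp y hφ

section TanhWave

variable {q L w ω k : ℝ}

theorem hasDerivAt_tanhWave_time (x t : ℝ) :
    HasDerivAt (fun t' => q + L * tanh (w + ω * t' - k * x))
      (L * ((1 - tanh (w + ω * t - k * x) ^ 2) * ω)) t := by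
  have hφ : HasDerivAt (fun t' => w + ω * t' - k * x) ω t := by
    simpa using (((hasDerivAt_id t).const_mul ω).const_add w).sub_const (k * x)
  exact (hφ.tanh.const_mul L).const_add q

theorem hasDerivAt_tanhWave_space_phase (t x : ℝ) :
    HasDerivAt (fun x' => w + ω * t - k * x') (-k) x := by
  simpa using ((hasDerivAt_id x).const_mul k).const_sub (w + ω * t)

theorem deriv_tanhWave_space (t : ℝ) :
    deriv (fun x' => q + L * tanh (w + ω * t - k * x'))
      = fun x' => L * ((1 - tanh (w + ω * t - k * x') ^ 2) * -k) :=
  funext fun x =>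
    (((hasDerivAt_tanhWave_space_phase t x).tanh.const_mul L).const_add q).deriv

theorem hasDerivAt_deriv_tanhWave_space (t x : ℝ) :
    HasDerivAt (fun x' => L * ((1 - tanh (w + ω * t - k * x') ^ 2) * -k))
      (L * (-(2 * tanh (w + ω * t - k * x) * ((1 - tanh (w + ω * t - k * x) ^ 2) * -k)) * -k))
      x := by
  have hsq := (hasDerivAt_tanhWave_space_phase (w := w) (ω := ω) (k := k) t x).tanh.fun_pow 2
  refine (((hsq.const_sub 1).mul_const (-k)).const_mul L).congr_deriv ?_
  norm_num

end TanhWave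

theorem tanhWave_solves_burgers (a ν q L w ω k : ℝ) (hspeed : ω = a * q * k)
    (hamplitude : a * L = 2 * ν * k) (x t : ℝ) :
    deriv (fun t' => q + L * tanh (w + ω * t' - k * x)) t
      + a * (q + L * tanh (w + ω * t - k * x))
          * deriv (fun x' => q + L * tanh (w + ω * t - k * x')) x
      - ν * deriv (deriv (fun x' => q + L * tanh (w + ω * t - k * x'))) x = 0 := by
  rw [(hasDerivAt_tanhWave_time x t).deriv, deriv_tanhWave_space,
    (hasDerivAt_deriv_tanhWave_space t x).deriv]
  linear_combination L * (1 - tanh (w + ω * t - k * x) ^ 2)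
    * (hspeed - k * tanh (w + ω * t - k * x) * hamplitude)

/-- `u(x,t) = 10 + 4·tanh(6 + 1.6·t − 0.4·x)` solves
`u_t + (2/5)·u·u_x − 2·u_xx = 0` on all of ℝ². -/
theorem example1_solves_vcFBE :
    ∀ x t : ℝ,
      deriv (fun t' => 10 + 4 * Real.tanh (6 + 1.6 * t' - 0.4 * x)) t
        + (2 / 5) * (10 + 4 * Real.tanh (6 + 1.6 * t - 0.4 * x))
            * deriv (fun x' => 10 + 4 * Real.tanh (6 + 1.6 * t - 0.4 * x')) x
        - 2 * deriv (deriv (fun x' => 10 + 4 * Real.tanh (6 + 1.6 * t - 0.4 * x'))) x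
        = 0 :=
  tanhWave_solves_burgers (2 / 5) 2 10 4 6 1.6 0.4 (by norm_num) (by norm_num)
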